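/- arXiv:1007.0773 — 2 statements merged into one kernel-verified Lean document; each statement's English description precedes it below -/
import Mathlib

section
/- Let 0 < ε < 1/2 and define h : ℝ → ℝ by h(θ) = −(1 + cos θ)^{1−ε} . Then h is continuously differentiable with h′(θ) = (1 − ε) sin θ · (1 + cos θ)^{−ε} (interpreted as 0 where 1 + cos θ = 0), and h′ is Hölder continuous with exponent 1 − 2ε: there exists a constant C such that |h′(θ₁) − h′(θ₂)| ≤ C|θ₁ − θ₂|^{1−2ε} for all θ₁, θ₂ ∈ ℝ. In other words, the restriction of the function −(1 + x)^{1−ε} to the unit circle, parameterized by angle, is C^{1,1−2ε}. -/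
open Real

namespace BRaux

noncomputable def g (ε x : ℝ) : ℝ := x * (x ^ 2) ^ (-ε)

variable {ε : ℝ}

lemma g_zero : g ε 0 = 0 := by simp [g]

lemma g_neg (x : ℝ) : g ε (-x) = - g ε x := by
  unfold g; rw [neg_sq]; ring

lemma g_of_nonneg (hε2 : ε < 1/2) {x : ℝ} (hx : 0 ≤ x) :
    g ε x = x ^ (1 - 2*ε) := by
  rcases eq_or_lt_of_le hx with h | h
  · rw [← h, g_zero, Real.zero_rpow (by intro h'; linarith)]
  · unfold g
    rw [← Real.rpow_natCast x 2, ← Real.rpow_mul hx]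
    nth_rewrite 1 [← Real.rpow_one x]
    rw [← Real.rpow_add h]
    congr 1
    push_cast
    ring

lemma abs_g (hε2 : ε < 1/2) (x : ℝ) : |g ε x| = |x| ^ (1 - 2*ε) := by
  rw [← g_of_nonneg hε2 (abs_nonneg x)]
  unfold g
  rw [sq_abs, abs_mul, abs_of_nonneg (Real.rpow_nonneg (sq_nonneg x) _)]

lemma add_rpow_le {p a b : ℝ} (ha : 0 ≤ a) (hb : 0 ≤ b) (hp : 0 ≤ p) (hp1 : p ≤ 1) :
    (a + b) ^ p ≤ a ^ p + b ^ p := by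
  lift a to NNReal using ha
  lift b to NNReal using hb
  have h := NNReal.rpow_add_le_add_rpow a b hp hp1
  exact_mod_cast h

lemma g_holder_nonneg (hε0 : 0 ≤ ε) (hε2 : ε < 1/2) {x y : ℝ} (hy : 0 ≤ y) (hyx : y ≤ x) :
    |g ε x - g ε y| ≤ 2 * (x - y) ^ (1 - 2*ε) := by
  have hx : 0 ≤ x := le_trans hy hyx
  rw [g_of_nonneg hε2 hx, g_of_nonneg hε2 hy]
  have h1 : y ^ (1 - 2*ε) ≤ x ^ (1 - 2*ε) := Real.rpow_le_rpow hy hyx (by linarith)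
  rw [abs_of_nonneg (by linarith)]
  have h2 : x ^ (1 - 2*ε) ≤ (x - y) ^ (1 - 2*ε) + y ^ (1 - 2*ε) := by
    have h := add_rpow_le (p := 1 - 2*ε) (sub_nonneg.2 hyx) hy (by linarith) (by linarith)
    rwa [sub_add_cancel] at h
  have h3 : 0 ≤ (x - y) ^ (1 - 2*ε) := Real.rpow_nonneg (sub_nonneg.2 hyx) _
  linarith

lemma g_holder (hε0 : 0 ≤ ε) (hε2 : ε < 1/2) (x y : ℝ) :
    |g ε x - g ε y| ≤ 2 * |x - y| ^ (1 - 2*ε) := by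
  wlog hyx : y ≤ x with H
  · rw [abs_sub_comm, abs_sub_comm x y]
    exact H hε0 hε2 y x (le_of_not_ge hyx)
  rw [abs_of_nonneg (sub_nonneg.2 hyx)]
  rcases le_or_gt 0 y with hy | hy
  · exact g_holder_nonneg hε0 hε2 hy hyx
  rcases le_or_gt x 0 with hx | hx
  · have h := g_holder_nonneg hε0 hε2 (x := -y) (y := -x) (by linarith) (by linarith)
    rw [g_neg, g_neg, show -g ε y - -g ε x = g ε x - g ε y by ring,
      show (-y) - (-x) = x - y by ring] at h
    exact h
  · -- mixed case : y < 0 < x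
    rw [g_of_nonneg hε2 hx.le,
      show g ε y = -((-y) ^ (1 - 2*ε)) by
        rw [← g_of_nonneg hε2 (by linarith : (0:ℝ) ≤ -y), ← g_neg, neg_neg]]
    have hA : x ^ (1 - 2*ε) ≤ (x - y) ^ (1 - 2*ε) :=
      Real.rpow_le_rpow hx.le (by linarith) (by linarith)
    have hB : (-y) ^ (1 - 2*ε) ≤ (x - y) ^ (1 - 2*ε) :=
      Real.rpow_le_rpow (by linarith) (by linarith) (by linarith)
    have hxa : 0 ≤ x ^ (1 - 2*ε) := Real.rpow_nonneg hx.le _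
    have hya : 0 ≤ (-y) ^ (1 - 2*ε) := Real.rpow_nonneg (by linarith) _
    rw [sub_neg_eq_add, abs_of_nonneg (by linarith)]
    linarith

lemma key (ε θ : ℝ) : Real.sin θ * (1 + Real.cos θ) ^ (-ε) =
    2 ^ (1 - ε) * (Real.sin (θ/2) * g ε (Real.cos (θ/2))) := by
  have h1 : 1 + Real.cos θ = 2 * Real.cos (θ/2) ^ 2 := by
    have h := Real.cos_two_mul (θ/2)
    rw [show (2:ℝ) * (θ/2) = θ by ring] at h
    rw [h]; ring
  have h2 : Real.sin θ = 2 * Real.sin (θ/2) * Real.cos (θ/2) := by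
    have h := Real.sin_two_mul (θ/2)
    rw [show (2:ℝ) * (θ/2) = θ by ring] at h
    exact h
  have h3 : (2:ℝ) ^ (1 - ε) = 2 * (2:ℝ) ^ (-ε) := by
    rw [show (1:ℝ) - ε = 1 + (-ε) by ring, Real.rpow_add (by norm_num), Real.rpow_one]
  rw [h1, h2, Real.mul_rpow (by norm_num) (sq_nonneg _), h3]
  unfold g
  ring

lemma sin_lip (a b : ℝ) : |Real.sin a - Real.sin b| ≤ |a - b| := by
  rw [Real.sin_sub_sin, abs_mul, abs_mul, abs_two]
  calc 2 * |Real.sin ((a-b)/2)| * |Real.cos ((a+b)/2)|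
      ≤ 2 * |(a-b)/2| * 1 := by
        have h1 : |Real.sin ((a-b)/2)| ≤ |(a-b)/2| := Real.abs_sin_le_abs
        have h2 := Real.abs_cos_le_one ((a+b)/2)
        exact mul_le_mul (by linarith) h2 (abs_nonneg _) (by positivity)
    _ = |a - b| := by rw [abs_div, abs_two]; ring

lemma cos_lip (a b : ℝ) : |Real.cos a - Real.cos b| ≤ |a - b| := by
  rw [Real.cos_sub_cos, abs_mul, abs_mul]
  calc |(-2 : ℝ)| * |Real.sin ((a+b)/2)| * |Real.sin ((a-b)/2)|
      ≤ 2 * 1 * |(a-b)/2| := by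
        rw [show |(-2:ℝ)| = 2 by norm_num]
        have h1 := Real.abs_sin_le_one ((a+b)/2)
        have h2 : |Real.sin ((a-b)/2)| ≤ |(a-b)/2| := Real.abs_sin_le_abs
        exact mul_le_mul (by linarith) h2 (abs_nonneg _) (by positivity)
    _ = |a - b| := by rw [abs_div, abs_two]; ring

end BRaux
/-- For 0 < ε < 1/2, the function h(θ) = -(1+cos θ)^{1-ε} is continuously
differentiable with derivative (1-ε) sin θ (1+cos θ)^{-ε} (interpreted as 0 where
1 + cos θ = 0, which is the value of the rpow convention), and its derivative is
Hölder continuous with exponent 1 - 2ε; i.e. h is C^{1,1-2ε}. -/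
theorem boundary_restriction_is_C1_one_minus_two_eps (ε : ℝ) (hε : 0 < ε) (hε2 : ε < 1/2) :
    (∀ θ : ℝ, HasDerivAt (fun t : ℝ => -(1 + Real.cos t) ^ (1 - ε))
      ((1 - ε) * Real.sin θ * (1 + Real.cos θ) ^ (-ε)) θ) ∧
    Continuous (fun θ : ℝ => (1 - ε) * Real.sin θ * (1 + Real.cos θ) ^ (-ε)) ∧
    ∃ C : ℝ, ∀ θ₁ θ₂ : ℝ,
      |(1 - ε) * Real.sin θ₁ * (1 + Real.cos θ₁) ^ (-ε) -
        (1 - ε) * Real.sin θ₂ * (1 + Real.cos θ₂) ^ (-ε)| ≤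
        C * |θ₁ - θ₂| ^ (1 - 2 * ε) := by
  have hα0 : (0:ℝ) < 1 - 2 * ε := by linarith
  have hα1 : (1:ℝ) - 2 * ε ≤ 1 := by linarith
  -- tendsto of |x - θ| ^ (1 - 2ε) to 0
  have habsrpow : ContinuousAt (fun y : ℝ => |y| ^ (1 - 2*ε)) 0 := by
    have h1 : ContinuousAt (fun y : ℝ => y ^ (1 - 2*ε)) (|(0:ℝ)|) := by
      rw [abs_zero]
      exact Real.continuousAt_rpow_const 0 _ (Or.inr (by linarith))
    exact h1.comp continuous_abs.continuousAt
  refine ⟨?_, ?_, ?_⟩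
  · -- derivative
    intro θ
    have h0 : 0 ≤ 1 + Real.cos θ := by nlinarith [Real.neg_one_le_cos θ]
    rcases eq_or_lt_of_le h0 with hc | hc
    · -- degenerate point : 1 + cos θ = 0
      have hcos : Real.cos θ = -1 := by linarith
      have hsin : Real.sin θ = 0 := by
        have h := Real.sin_sq_add_cos_sq θ
        have h2 : Real.sin θ ^ 2 = 0 := by nlinarith
        exact pow_eq_zero_iff (by norm_num) |>.1 h2
      rw [show (1 - ε) * Real.sin θ * (1 + Real.cos θ) ^ (-ε) = 0 by rw [hsin]; ring]
      rw [hasDerivAt_iff_tendsto_slope]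
      have hfθ : -(1 + Real.cos θ) ^ (1 - ε) = 0 := by
        rw [← hc, Real.zero_rpow (by intro h'; linarith), neg_zero]
      apply squeeze_zero_norm' (a := fun x => |x - θ| ^ (1 - 2*ε))
      · filter_upwards [self_mem_nhdsWithin] with x hx
        have hu : x - θ ≠ 0 := sub_ne_zero.2 hx
        have hupos : 0 < |x - θ| := abs_pos.2 hu
        have h0x : 0 ≤ 1 + Real.cos x := by nlinarith [Real.neg_one_le_cos x]
        -- 1 + cos x ≤ (x-θ)²/2
        have h1 : Real.cos x = -Real.cos (x - θ) := by
          have h := Real.cos_add (x - θ) θ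
          rw [sub_add_cancel] at h
          rw [h, hcos, hsin]; ring
        have h2 : Real.sin ((x - θ)/2) ^ 2 ≤ ((x - θ)/2) ^ 2 := by
          have h := Real.abs_sin_le_abs (x := (x - θ)/2)
          calc Real.sin ((x - θ)/2) ^ 2 = |Real.sin ((x - θ)/2)| ^ 2 := (sq_abs _).symm
            _ ≤ |(x - θ)/2| ^ 2 := by exact pow_le_pow_left₀ (abs_nonneg _) h 2
            _ = ((x - θ)/2) ^ 2 := sq_abs _
        have hc2 : Real.cos (x - θ) = 2 * Real.cos ((x - θ)/2) ^ 2 - 1 := by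
          rw [← Real.cos_two_mul]; ring_nf
        have hpy := Real.sin_sq_add_cos_sq ((x - θ)/2)
        have hb : 1 + Real.cos x ≤ (x - θ) ^ 2 / 2 := by
          rw [h1, hc2]; nlinarith
        -- rpow estimate
        have hA : (1 + Real.cos x) ^ (1 - ε) ≤ ((x - θ) ^ 2) ^ (1 - ε) :=
          Real.rpow_le_rpow h0x (by nlinarith) (by linarith)
        have hB : ((x - θ) ^ 2) ^ (1 - ε) = |x - θ| ^ (2 * (1 - ε)) := by
          rw [← sq_abs, ← Real.rpow_natCast |x - θ| 2, ← Real.rpow_mul (abs_nonneg _)]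
          norm_num
        have hC : |x - θ| ^ (2 * (1 - ε)) = |x - θ| ^ (1 - 2*ε) * |x - θ| := by
          rw [show 2 * (1 - ε) = (1 - 2*ε) + 1 by ring, Real.rpow_add hupos, Real.rpow_one]
        have hb2 : (1 + Real.cos x) ^ (1 - ε) ≤ |x - θ| ^ (1 - 2*ε) * |x - θ| := by
          rw [← hC, ← hB]; exact hA
        have hslope : ‖slope (fun t : ℝ => -(1 + Real.cos t) ^ (1 - ε)) θ x‖ =
            (1 + Real.cos x) ^ (1 - ε) / |x - θ| := by
          rw [slope_def_field, Real.norm_eq_abs, abs_div]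
          congr 1
          rw [hfθ, sub_zero, abs_neg,
            abs_of_nonneg (Real.rpow_nonneg h0x _)]
        rw [hslope, div_le_iff₀ hupos]
        exact hb2
      · have hsub : Filter.Tendsto (fun x : ℝ => x - θ) (nhdsWithin θ {θ}ᶜ) (nhds 0) := by
          have h : Filter.Tendsto (fun x : ℝ => x - θ) (nhds θ) (nhds (θ - θ)) :=
            Filter.Tendsto.sub Filter.tendsto_id tendsto_const_nhds
          rw [sub_self] at h
          exact h.mono_left nhdsWithin_le_nhds
        have h := habsrpow.tendsto.comp hsub
        simpa [Function.comp_def, Real.zero_rpow (ne_of_gt hα0)] using h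
    · -- nondegenerate point
      have h1 : HasDerivAt (fun t : ℝ => 1 + Real.cos t) (-Real.sin θ) θ :=
        (Real.hasDerivAt_cos θ).const_add 1
      have h2 : HasDerivAt (fun y : ℝ => y ^ (1 - ε))
          ((1 - ε) * (1 + Real.cos θ) ^ (1 - ε - 1)) (1 + Real.cos θ) :=
        Real.hasDerivAt_rpow_const (Or.inl (ne_of_gt hc))
      have h3 : HasDerivAt (fun t : ℝ => (1 + Real.cos t) ^ (1 - ε))
          ((1 - ε) * (1 + Real.cos θ) ^ (1 - ε - 1) * (-Real.sin θ)) θ := by have := h2.comp θ h1; exact this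
      have h4 : HasDerivAt (fun t : ℝ => -(1 + Real.cos t) ^ (1 - ε))
          (-((1 - ε) * (1 + Real.cos θ) ^ (1 - ε - 1) * (-Real.sin θ))) θ := h3.neg
      convert h4 using 1
      rw [show (1:ℝ) - ε - 1 = -ε by ring]
      ring
  · -- continuity
    have hg : Continuous (BRaux.g ε) := by
      rw [continuous_iff_continuousAt]
      intro x
      rcases eq_or_ne x 0 with rfl | hx
      · have h0 : BRaux.g ε 0 = 0 := BRaux.g_zero
        rw [ContinuousAt, h0]
        apply squeeze_zero_norm (a := fun y : ℝ => |y| ^ (1 - 2*ε))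
        · intro y
          rw [Real.norm_eq_abs, BRaux.abs_g hε2]
        · have h := habsrpow.tendsto
          simpa [Real.zero_rpow (ne_of_gt hα0)] using h
      · have h1 : ContinuousAt (fun y : ℝ => (y ^ 2) ^ (-ε)) x := by
          have h2 : ContinuousAt (fun z : ℝ => z ^ (-ε)) (x ^ 2) :=
            Real.continuousAt_rpow_const _ _ (Or.inl (pow_ne_zero 2 hx))
          exact ContinuousAt.comp (f := fun y : ℝ => y ^ 2) h2 (continuousAt_pow x 2)
        exact continuousAt_id.mul h1
    have heq : (fun θ : ℝ => (1 - ε) * Real.sin θ * (1 + Real.cos θ) ^ (-ε)) =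
        fun θ : ℝ => (1 - ε) * (2 ^ (1 - ε) * (Real.sin (θ/2) * BRaux.g ε (Real.cos (θ/2)))) := by
      funext θ
      rw [mul_assoc, BRaux.key]
    rw [heq]
    exact continuous_const.mul (continuous_const.mul
      ((Real.continuous_sin.comp (continuous_id.div_const 2)).mul
        (hg.comp (Real.continuous_cos.comp (continuous_id.div_const 2)))))
  · -- Hölder continuity
    have habsg : ∀ c : ℝ, |c| ≤ 1 → |BRaux.g ε c| ≤ 1 := by
      intro c hc
      rw [BRaux.abs_g hε2]
      exact Real.rpow_le_one (abs_nonneg _) hc (le_of_lt hα0)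
    have hK1 : (0:ℝ) ≤ 2 ^ (1 - ε) := Real.rpow_nonneg (by norm_num) _
    have hK2 : (2:ℝ) ^ (1 - ε) ≤ 2 := by
      have h := Real.rpow_le_rpow_of_exponent_le (by norm_num : (1:ℝ) ≤ 2)
        (by linarith : 1 - ε ≤ 1)
      rwa [Real.rpow_one] at h
    -- |f θ| ≤ 2
    have habsf : ∀ θ : ℝ, |(1 - ε) * Real.sin θ * (1 + Real.cos θ) ^ (-ε)| ≤ 2 := by
      intro θ
      rw [mul_assoc, BRaux.key, abs_mul, abs_mul, abs_mul]
      have h1 : |1 - ε| ≤ 1 := by rw [abs_of_nonneg (by linarith)]; linarith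
      have h2 : |(2:ℝ) ^ (1 - ε)| ≤ 2 := by rwa [abs_of_nonneg hK1]
      have h3 : |Real.sin (θ/2)| ≤ 1 := Real.abs_sin_le_one _
      have h4 : |BRaux.g ε (Real.cos (θ/2))| ≤ 1 := habsg _ (Real.abs_cos_le_one _)
      have h5 : |Real.sin (θ/2)| * |BRaux.g ε (Real.cos (θ/2))| ≤ 1 :=
        mul_le_one₀ h3 (abs_nonneg _) h4
      calc |1 - ε| * (|(2:ℝ) ^ (1 - ε)| * (|Real.sin (θ/2)| * |BRaux.g ε (Real.cos (θ/2))|))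
          ≤ 1 * (2 * 1) :=
            mul_le_mul h1 (mul_le_mul h2 h5 (by positivity) (by norm_num))
              (by positivity) (by norm_num)
        _ = 2 := by norm_num
    refine ⟨5, fun θ₁ θ₂ => ?_⟩
    rcases eq_or_ne θ₁ θ₂ with rfl | hne
    · simp [Real.zero_rpow (ne_of_gt hα0)]
    have hd : 0 < |θ₁ - θ₂| := abs_pos.2 (sub_ne_zero.2 hne)
    set d := |θ₁ - θ₂| with hdd
    have hda : 0 ≤ d ^ (1 - 2*ε) := Real.rpow_nonneg hd.le _
    -- decomposition
    have e : (1 - ε) * Real.sin θ₁ * (1 + Real.cos θ₁) ^ (-ε) -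
        (1 - ε) * Real.sin θ₂ * (1 + Real.cos θ₂) ^ (-ε) =
        ((1 - ε) * 2 ^ (1 - ε)) *
          ((Real.sin (θ₁/2) - Real.sin (θ₂/2)) * BRaux.g ε (Real.cos (θ₁/2)) +
           Real.sin (θ₂/2) * (BRaux.g ε (Real.cos (θ₁/2)) - BRaux.g ε (Real.cos (θ₂/2)))) := by
      rw [mul_assoc, mul_assoc, BRaux.key, BRaux.key]
      ring
    have hss : |Real.sin (θ₁/2) - Real.sin (θ₂/2)| ≤ d / 2 := by
      have h := BRaux.sin_lip (θ₁/2) (θ₂/2)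
      rwa [show θ₁/2 - θ₂/2 = (θ₁ - θ₂)/2 by ring, abs_div, abs_two] at h
    have hcc : |Real.cos (θ₁/2) - Real.cos (θ₂/2)| ≤ d / 2 := by
      have h := BRaux.cos_lip (θ₁/2) (θ₂/2)
      rwa [show θ₁/2 - θ₂/2 = (θ₁ - θ₂)/2 by ring, abs_div, abs_two] at h
    have hgg : |BRaux.g ε (Real.cos (θ₁/2)) - BRaux.g ε (Real.cos (θ₂/2))| ≤
        2 * d ^ (1 - 2*ε) := by
      have h := BRaux.g_holder hε.le hε2 (Real.cos (θ₁/2)) (Real.cos (θ₂/2))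
      have h2 : |Real.cos (θ₁/2) - Real.cos (θ₂/2)| ^ (1 - 2*ε) ≤ d ^ (1 - 2*ε) :=
        Real.rpow_le_rpow (abs_nonneg _) (le_trans hcc (by linarith)) hα0.le
      linarith
    have hg1 : |BRaux.g ε (Real.cos (θ₁/2))| ≤ 1 := habsg _ (Real.abs_cos_le_one _)
    have hs2 : |Real.sin (θ₂/2)| ≤ 1 := Real.abs_sin_le_one _
    have hmain : |(1 - ε) * Real.sin θ₁ * (1 + Real.cos θ₁) ^ (-ε) -
        (1 - ε) * Real.sin θ₂ * (1 + Real.cos θ₂) ^ (-ε)| ≤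
        2 * (d / 2 + 2 * d ^ (1 - 2*ε)) := by
      rw [e, abs_mul]
      have hT : |(Real.sin (θ₁/2) - Real.sin (θ₂/2)) * BRaux.g ε (Real.cos (θ₁/2)) +
           Real.sin (θ₂/2) * (BRaux.g ε (Real.cos (θ₁/2)) - BRaux.g ε (Real.cos (θ₂/2)))| ≤
           d / 2 + 2 * d ^ (1 - 2*ε) := by
        refine le_trans (abs_add_le _ _) ?_
        rw [abs_mul, abs_mul]
        have h1 : |Real.sin (θ₁/2) - Real.sin (θ₂/2)| * |BRaux.g ε (Real.cos (θ₁/2))| ≤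
            d / 2 := by
          calc _ ≤ (d/2) * 1 := mul_le_mul hss hg1 (abs_nonneg _) (by positivity)
            _ = d / 2 := by ring
        have h2 : |Real.sin (θ₂/2)| * |BRaux.g ε (Real.cos (θ₁/2)) -
            BRaux.g ε (Real.cos (θ₂/2))| ≤ 2 * d ^ (1 - 2*ε) := by
          calc _ ≤ 1 * (2 * d ^ (1 - 2*ε)) :=
                mul_le_mul hs2 hgg (abs_nonneg _) (by norm_num)
            _ = 2 * d ^ (1 - 2*ε) := by ring
        linarith
      have hKabs : |(1 - ε) * 2 ^ (1 - ε)| ≤ 2 := by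
        rw [abs_of_nonneg (mul_nonneg (by linarith) hK1)]
        nlinarith
      exact mul_le_mul hKabs hT (abs_nonneg _) (by norm_num)
    rcases le_or_gt d 1 with hd1 | hd1
    · have hdle : d ≤ d ^ (1 - 2*ε) := by
        have h := Real.rpow_le_rpow_of_exponent_ge hd hd1 hα1
        rwa [Real.rpow_one] at h
      linarith
    · have h1 : 1 ≤ d ^ (1 - 2*ε) := by
        have h := Real.rpow_le_rpow (by norm_num : (0:ℝ) ≤ 1) hd1.le hα0.le
        rwa [Real.one_rpow] at h
      have h2 := habsf θ₁
      have h3 := habsf θ₂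
      have h4 : |(1 - ε) * Real.sin θ₁ * (1 + Real.cos θ₁) ^ (-ε) -
          (1 - ε) * Real.sin θ₂ * (1 + Real.cos θ₂) ^ (-ε)| ≤
          |(1 - ε) * Real.sin θ₁ * (1 + Real.cos θ₁) ^ (-ε)| +
          |(1 - ε) * Real.sin θ₂ * (1 + Real.cos θ₂) ^ (-ε)| := abs_sub _ _
      linarith
end

section
/- Let 0 < ε < 1 and let u(x, y) = −(1 + x)^{1−ε} on the open unit disk B₁ ⊂ ℝ². Then u is differentiable on B₁ ∩ {x > −1} with ∂u/∂x (x, y) = −(1 − ε)(1 + x)^{−ε}, and this partial derivative is unbounded on the open unit disk (it tends to −∞ as (x, y) → (−1, 0)). Consequently u is not Lipschitz continuous on the open unit disk, and hence is not C^{1,α} up to the boundary of B₁ for any α > 0, even though u is convex and continuous on the closed disk and its boundary restriction is C^{1,1−2ε}. This shows the interior C^{1,α} regularity of the convex envelope of C^{1,α} boundary data is optimal in the sense that it cannot be extended up to the boundary. -/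
open Filter Set

lemma aux_coord_le (p : EuclideanSpace ℝ (Fin 2)) : |p 0| ≤ ‖p‖ := by
  have h : p 0 = inner ℝ (EuclideanSpace.single (0 : Fin 2) (1:ℝ)) p := by
    simp [EuclideanSpace.inner_single_left]
  rw [h]
  calc |inner ℝ (EuclideanSpace.single (0 : Fin 2) (1:ℝ)) p|
      ≤ ‖EuclideanSpace.single (0 : Fin 2) (1:ℝ)‖ * ‖p‖ := abs_real_inner_le_norm _ _
    _ = ‖p‖ := by simp [EuclideanSpace.norm_single]

lemma aux_hasFDerivAt (ε : ℝ) (u : EuclideanSpace ℝ (Fin 2) → ℝ)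
    (hu : ∀ p : EuclideanSpace ℝ (Fin 2), u p = -(1 + p 0) ^ (1 - ε))
    (p : EuclideanSpace ℝ (Fin 2)) (hp : -1 < p 0) :
    HasFDerivAt u ((-((1 - ε) * (1 + p 0) ^ (-ε))) •
      (EuclideanSpace.proj (0 : Fin 2) : EuclideanSpace ℝ (Fin 2) →L[ℝ] ℝ)) p := by
  have hx : (0:ℝ) < 1 + p 0 := by linarith
  have h1 : HasDerivAt (fun t : ℝ => t ^ (1 - ε)) ((1-ε) * (1 + p 0) ^ ((1-ε)-1)) (1 + p 0) :=
    Real.hasDerivAt_rpow_const (Or.inl hx.ne')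
  have h2 : HasFDerivAt (fun q : EuclideanSpace ℝ (Fin 2) => 1 + q 0)
      (EuclideanSpace.proj (0 : Fin 2) : EuclideanSpace ℝ (Fin 2) →L[ℝ] ℝ) p := by
    simpa using ((EuclideanSpace.proj (0 : Fin 2) :
      EuclideanSpace ℝ (Fin 2) →L[ℝ] ℝ).hasFDerivAt (x := p)).const_add 1
  have h3 := (h1.comp_hasFDerivAt p h2).neg
  have hfun : u = fun q => -((1 + q 0) ^ (1 - ε)) := funext hu
  rw [show ((1:ℝ)-ε)-1 = -ε from by ring] at h3
  rw [hfun]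
  simpa [neg_smul, Function.comp_def, Pi.neg_def] using h3

-- tendsto: x^(-ε) → ∞ as x → 0⁺
lemma aux_tendsto (ε : ℝ) (hε : 0 < ε) :
    Tendsto (fun x : ℝ => x ^ (-ε)) (nhdsWithin 0 (Ioi 0)) atTop := by
  have h := (tendsto_rpow_atTop hε).comp tendsto_inv_nhdsGT_zero
  refine h.congr' ?_
  filter_upwards [self_mem_nhdsWithin] with x (hx : 0 < x)
  simp [Function.comp, Real.rpow_neg hx.le, Real.inv_rpow hx.le]

/-- The function u(x,y) = -(1+x)^{1-ε} on the unit disk: it is differentiable where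
x > -1 with ∂u/∂x = -(1-ε)(1+x)^{-ε}; this partial derivative is unbounded on the
open unit disk, so u is not Lipschitz there (hence not C^{1,α} up to the boundary
for any α > 0), even though u is convex and continuous on the closed disk. -/
theorem optimal_interior_regularity_counterexample (ε : ℝ) (hε : 0 < ε) (hε1 : ε < 1)
    (u : EuclideanSpace ℝ (Fin 2) → ℝ)
    (hu : ∀ p : EuclideanSpace ℝ (Fin 2), u p = -(1 + p 0) ^ (1 - ε)) :
    (∀ p : EuclideanSpace ℝ (Fin 2), ‖p‖ < 1 → -1 < p 0 →
      DifferentiableAt ℝ u p ∧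
      fderiv ℝ u p (EuclideanSpace.single 0 1) = -(1 - ε) * (1 + p 0) ^ (-ε)) ∧
    (∀ M : ℝ, ∃ p : EuclideanSpace ℝ (Fin 2), ‖p‖ < 1 ∧ -1 < p 0 ∧
      fderiv ℝ u p (EuclideanSpace.single 0 1) < -M) ∧
    (¬ ∃ C : ℝ, ∀ p q : EuclideanSpace ℝ (Fin 2), ‖p‖ < 1 → ‖q‖ < 1 →
      |u p - u q| ≤ C * ‖p - q‖) ∧
    ConvexOn ℝ (Metric.closedBall (0 : EuclideanSpace ℝ (Fin 2)) 1) u ∧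
    ContinuousOn u (Metric.closedBall (0 : EuclideanSpace ℝ (Fin 2)) 1) := by
  have hfd : ∀ p : EuclideanSpace ℝ (Fin 2), -1 < p 0 →
      fderiv ℝ u p (EuclideanSpace.single 0 1) = -(1 - ε) * (1 + p 0) ^ (-ε) := by
    intro p hp
    rw [(aux_hasFDerivAt ε u hu p hp).fderiv]
    simp [EuclideanSpace.single_apply]
    ring
  refine ⟨?_, ?_, ?_, ?_, ?_⟩
  · intro p _ hp
    exact ⟨(aux_hasFDerivAt ε u hu p hp).differentiableAt, hfd p hp⟩
  · -- unbounded derivative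
    intro M
    have ht : Tendsto (fun x : ℝ => -((1 - ε) * x ^ (-ε))) (nhdsWithin 0 (Ioi 0)) atBot := by
      apply Filter.tendsto_neg_atBot_iff.mpr
      exact (aux_tendsto ε hε).const_mul_atTop (by linarith)
    have h1 : ∀ᶠ x in nhdsWithin (0:ℝ) (Ioi 0), -((1 - ε) * x ^ (-ε)) < -M :=
      ht.eventually (eventually_lt_atBot (-M))
    have h2 : ∀ᶠ x in nhdsWithin (0:ℝ) (Ioi 0), x ∈ Ioo (0:ℝ) 1 :=
      Ioo_mem_nhdsGT_of_mem ⟨le_refl 0, zero_lt_one⟩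
    obtain ⟨x, hx1, hx2⟩ := (h1.and h2).exists
    refine ⟨EuclideanSpace.single 0 (x - 1), ?_, ?_, ?_⟩
    · rw [EuclideanSpace.norm_single]
      rw [Real.norm_eq_abs, abs_of_nonpos (by linarith [hx2.2])]
      linarith [hx2.1]
    · simp [EuclideanSpace.single_apply]; linarith [hx2.1]
    · rw [hfd _ (by simp [EuclideanSpace.single_apply]; linarith [hx2.1])]
      have : (1 : ℝ) + EuclideanSpace.single (0 : Fin 2) (x-1) 0 = x := by
        simp [EuclideanSpace.single_apply]
      rw [this]
      calc -(1-ε) * x ^ (-ε) = -((1-ε) * x ^ (-ε)) := by ring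
        _ < -M := hx1
  · -- not Lipschitz
    rintro ⟨C, hC⟩
    have hc2 : (0:ℝ) < 2 ^ ((1:ℝ) - ε) - 1 := by
      have : (1:ℝ) < 2 ^ ((1:ℝ)-ε) := by
        nth_rewrite 1 [show (1:ℝ) = 2 ^ (0:ℝ) from (Real.rpow_zero 2).symm]
        exact Real.rpow_lt_rpow_left_iff (by norm_num) |>.mpr (by linarith)
      linarith
    have ht : Tendsto (fun δ : ℝ => C * δ ^ ε) (nhdsWithin 0 (Ioi 0)) (nhds 0) := by
      have h0 : Tendsto (fun δ : ℝ => δ ^ ε) (nhdsWithin 0 (Ioi 0)) (nhds 0) := by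
        have := (Real.continuousAt_rpow_const 0 ε (Or.inr hε.le)).tendsto
        rw [Real.zero_rpow hε.ne'] at this
        exact this.mono_left nhdsWithin_le_nhds
      simpa using h0.const_mul C
    have h1 : ∀ᶠ δ in nhdsWithin (0:ℝ) (Ioi 0), C * δ ^ ε < 2 ^ ((1:ℝ)-ε) - 1 :=
      ht.eventually (eventually_lt_nhds hc2)
    have h2 : ∀ᶠ δ in nhdsWithin (0:ℝ) (Ioi 0), δ ∈ Ioo (0:ℝ) (1/2) :=
      Ioo_mem_nhdsGT_of_mem ⟨le_refl 0, by norm_num⟩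
    obtain ⟨δ, hδ1, hδ2⟩ := (h1.and h2).exists
    obtain ⟨hδpos, hδlt⟩ := hδ2
    set p : EuclideanSpace ℝ (Fin 2) := EuclideanSpace.single 0 (2*δ - 1)
    set q : EuclideanSpace ℝ (Fin 2) := EuclideanSpace.single 0 (δ - 1)
    have hp : ‖p‖ < 1 := by
      rw [EuclideanSpace.norm_single, Real.norm_eq_abs, abs_of_nonpos (by linarith)]
      linarith
    have hq : ‖q‖ < 1 := by
      rw [EuclideanSpace.norm_single, Real.norm_eq_abs, abs_of_nonpos (by linarith)]
      linarith
    have hpq : ‖p - q‖ = δ := by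
      have : p - q = EuclideanSpace.single 0 δ := by
        ext i
        by_cases h : i = 0 <;>
          simp [p, q, EuclideanSpace.single_apply, h] <;> ring
      rw [this, EuclideanSpace.norm_single, Real.norm_eq_abs, abs_of_pos hδpos]
    have hup : u p = -(2*δ) ^ (1-ε) := by
      have e1 : (1:ℝ) + p 0 = 2*δ := by
        simp [p, EuclideanSpace.single_apply]
      rw [hu, e1]
    have huq : u q = -δ ^ (1-ε) := by
      have e1 : (1:ℝ) + q 0 = δ := by
        simp [q, EuclideanSpace.single_apply]
      rw [hu, e1]
    have key := hC p q hp hq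
    rw [hup, huq, hpq] at key
    have hmono : δ ^ ((1:ℝ)-ε) ≤ (2*δ) ^ ((1:ℝ)-ε) :=
      Real.rpow_le_rpow hδpos.le (by linarith) (by linarith)
    rw [abs_of_nonpos (by linarith)] at key
    have hmul : (2*δ) ^ ((1:ℝ)-ε) = 2 ^ ((1:ℝ)-ε) * δ ^ ((1:ℝ)-ε) :=
      Real.mul_rpow (by norm_num) hδpos.le
    have hsplit : δ = δ ^ ε * δ ^ ((1:ℝ)-ε) := by
      rw [← Real.rpow_add hδpos]
      norm_num
    have hpow : (0:ℝ) < δ ^ ((1:ℝ)-ε) := Real.rpow_pos_of_pos hδpos _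
    -- key : -(-(2δ)^{1-ε} - (-δ^{1-ε})) ≤ C * δ
    have key2 : (2 ^ ((1:ℝ)-ε) - 1) * δ ^ ((1:ℝ)-ε) ≤ C * δ ^ ε * δ ^ ((1:ℝ)-ε) := by
      calc (2 ^ ((1:ℝ)-ε) - 1) * δ ^ ((1:ℝ)-ε) = (2*δ) ^ ((1:ℝ)-ε) - δ ^ ((1:ℝ)-ε) := by
            rw [hmul]; ring
        _ ≤ C * δ := by linarith
        _ = C * δ ^ ε * δ ^ ((1:ℝ)-ε) := by
            exact (congrArg (fun t => C * t) hsplit).trans (mul_assoc C _ _).symm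
    have := (mul_le_mul_iff_of_pos_right hpow).mp key2
    linarith
  · -- convexity
    refine ⟨convex_closedBall _ _, fun p hp q hq a b ha hb hab => ?_⟩
    have hpm : (0:ℝ) ≤ 1 + p 0 := by
      have := aux_coord_le p
      have hb1 : ‖p‖ ≤ 1 := by simpa using hp
      have := abs_le.mp (this.trans hb1)
      linarith [this.1]
    have hqm : (0:ℝ) ≤ 1 + q 0 := by
      have := aux_coord_le q
      have hb1 : ‖q‖ ≤ 1 := by simpa using hq
      have := abs_le.mp (this.trans hb1)
      linarith [this.1]
    have hconc := (Real.concaveOn_rpow (by linarith : (0:ℝ) ≤ 1-ε) (by linarith)).2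
      (mem_Ici.mpr hpm) (mem_Ici.mpr hqm) ha hb hab
    simp only [smul_eq_mul] at hconc
    have hcoord : (a • p + b • q) 0 = a * p 0 + b * q 0 := by
      simp [PiLp.add_apply, PiLp.smul_apply, smul_eq_mul]
    rw [hu, hu, hu, hcoord, smul_eq_mul, smul_eq_mul]
    have harg : 1 + (a * p 0 + b * q 0) = a * (1 + p 0) + b * (1 + q 0) := by
      linear_combination (-1 : ℝ) * hab
    rw [harg]
    linarith
  · -- continuity
    have hfun : u = fun p : EuclideanSpace ℝ (Fin 2) => -((1 + p 0) ^ (1-ε)) := funext hu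
    rw [hfun]
    apply Continuous.continuousOn
    apply Continuous.neg
    apply (Real.continuous_rpow_const (by linarith)).comp
    exact continuous_const.add (PiLp.continuous_apply 2 _ (0 : Fin 2))
end
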